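/- Fix a coordinate i. If z, z' ∈ ℝ and the offset o is uniform on [0,β], then the probability that z and z' lie in different grid cells (i.e., their rounded-down grid points differ) is at most |z − z'|/β, provided |z − z'| ≤ β. -/

import Mathlib

open MeasureTheory Set

/-- The uniform probability measure on the interval `[a, b]`. -/
noncomputable def unifMeas (a b : ℝ) : Measure ℝ :=
  (ENNReal.ofReal (b - a))⁻¹ • volume.restrict (Icc a b)

/-- The largest grid point `o + jβ` (for `j : ℤ`) that is `≤ x`. -/
noncomputable def gridFloor (β o x : ℝ) : ℝ := o + β * ⌊(x - o) / β⌋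

/-!
The event "z and z' are rounded to different grid points" is invariant under shifting the offset
by a multiple of `β`, so its Lebesgue measure on `[0, β]` equals its measure on any period
`(z - β, z]`. For an offset `o` in that window (and `z' ≤ z`), `z` rounds down to `o` itself,
and so does `z'` unless `z' < o`; hence the event is contained in `(z', z]`.
-/

lemma unifMeas_apply (a b : ℝ) (s : Set ℝ) :
    unifMeas a b s = (ENNReal.ofReal (b - a))⁻¹ * volume (s ∩ Icc a b) := by
  rw [unifMeas, Measure.smul_apply, smul_eq_mul, Measure.restrict_apply' measurableSet_Icc]

lemma volume_inter_Icc_eq_of_periodic {β : ℝ} (hβ : 0 < β) {A : Set ℝ} (hA : MeasurableSet A)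
    (hper : ∀ (n : ℤ) (o : ℝ), o + n * β ∈ A ↔ o ∈ A) (a t : ℝ) :
    volume (A ∩ Icc a (a + β)) = volume (A ∩ Ioc t (t + β)) := by
  rw [← measure_congr ((Filter.EventuallyEq.refl _ A).inter Ioc_ae_eq_Icc)]
  refine (isAddFundamentalDomain_Ioc hβ a).measure_set_eq (isAddFundamentalDomain_Ioc hβ t) hA ?_
  rintro ⟨g, n, rfl⟩
  ext o
  simpa [add_comm] using hper n o

section gridFloor

variable {β : ℝ}

lemma gridFloor_add_int_mul (hβ : β ≠ 0) (n : ℤ) (o x : ℝ) :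
    gridFloor β (o + n * β) x = gridFloor β o x := by
  have h : (x - (o + n * β)) / β = (x - o) / β - n := by field_simp; ring
  rw [gridFloor, gridFloor, h, Int.floor_sub_intCast]
  push_cast
  ring

lemma gridFloor_eq_self (hβ : 0 < β) {o x : ℝ} (hox : o ≤ x) (hxo : x < o + β) :
    gridFloor β o x = o := by
  have h : ⌊(x - o) / β⌋ = 0 := by
    rw [Int.floor_eq_zero_iff]
    constructor
    · exact div_nonneg (by linarith) hβ.le
    · rw [div_lt_one hβ]; linarith
  simp [gridFloor, h]

lemma measurable_gridFloor (x : ℝ) : Measurable fun o => gridFloor β o x := by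
  unfold gridFloor
  fun_prop

lemma measurableSet_gridFloor_ne (x y : ℝ) :
    MeasurableSet {o : ℝ | gridFloor β o x ≠ gridFloor β o y} :=
  (measurableSet_eq_fun (measurable_gridFloor x) (measurable_gridFloor y)).compl

lemma gridFloor_ne_inter_Ioc_subset (hβ : 0 < β) {z z' : ℝ} (hz : z' ≤ z) :
    {o : ℝ | gridFloor β o z ≠ gridFloor β o z'} ∩ Ioc (z - β) z ⊆ Ioc z' z := by
  rintro o ⟨hne, hlo, hhi⟩
  refine ⟨lt_of_not_ge fun hoz' => hne ?_, hhi⟩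
  rw [gridFloor_eq_self hβ hhi (by linarith), gridFloor_eq_self hβ hoz' (by linarith)]

end gridFloor

theorem stmt1_general (β : ℝ) (hβ : 0 < β) (z z' : ℝ) :
    unifMeas 0 β {o : ℝ | gridFloor β o z ≠ gridFloor β o z'}
      ≤ ENNReal.ofReal (|z - z'| / β) := by
  wlog hz : z' ≤ z generalizing z z'
  · simpa only [ne_comm, abs_sub_comm] using this z' z (le_of_not_ge hz)
  set A := {o : ℝ | gridFloor β o z ≠ gridFloor β o z'}
  have hper (n : ℤ) (o : ℝ) : o + n * β ∈ A ↔ o ∈ A := by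
    simp only [A, mem_ofPred_eq, gridFloor_add_int_mul hβ.ne']
  have hvol : volume (A ∩ Icc 0 β) ≤ ENNReal.ofReal |z - z'| := calc
    volume (A ∩ Icc 0 β)
    _ = volume (A ∩ Ioc (z - β) z) := by
        simpa only [zero_add, sub_add_cancel] using
          volume_inter_Icc_eq_of_periodic hβ (measurableSet_gridFloor_ne z z') hper 0 (z - β)
    _ ≤ volume (Ioc z' z) := measure_mono (gridFloor_ne_inter_Ioc_subset hβ hz)
    _ = ENNReal.ofReal |z - z'| := by rw [Real.volume_Ioc, abs_of_nonneg (sub_nonneg.2 hz)]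
  rw [unifMeas_apply, sub_zero, ENNReal.ofReal_div_of_pos hβ, div_eq_mul_inv, mul_comm]
  gcongr

theorem stmt1 (β : ℝ) (hβ : 0 < β) (z z' : ℝ) (h : |z - z'| ≤ β) :
    unifMeas 0 β {o : ℝ | gridFloor β o z ≠ gridFloor β o z'}
      ≤ ENNReal.ofReal (|z - z'| / β) :=
  stmt1_general β hβ z z'
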